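/- arXiv:1806.04459 — 4 statements merged into one kernel-verified Lean document; each statement's English description precedes it below -/
import Mathlib

section
/- Let X be a partially ordered set and σ : X → X an order-reversing involution without fixed points. Call a subset I ⊆ X an ideal if x ∈ I and y ≤ x imply y ∈ I; call an ideal σ-fat if x ∉ I implies σ(x) ∈ I, and σ-slim if x ∈ I implies σ(x) ∉ I. Then every minimal σ-fat ideal (minimal with respect to inclusion among σ-fat ideals) is both σ-fat and σ-slim (i.e., σ-balanced). -/
/-- A subset `I` of a partially ordered set is an ideal if it is downward closed. -/
def IsIdeal {X : Type*} [PartialOrder X] (I : Set X) : Prop :=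
  ∀ x ∈ I, ∀ y, y ≤ x → y ∈ I

/-- An ideal is `σ`-fat if the complement of `I` is mapped into `I` by `σ`. -/
def IsFatIdeal {X : Type*} [PartialOrder X] (σ : X → X) (I : Set X) : Prop :=
  IsIdeal I ∧ ∀ x, x ∉ I → σ x ∈ I

/-- An ideal is `σ`-slim if it is disjoint from its `σ`-image. -/
def IsSlimIdeal {X : Type*} [PartialOrder X] (σ : X → X) (I : Set X) : Prop :=
  IsIdeal I ∧ ∀ x, x ∈ I → σ x ∉ I

/-- An ideal is `σ`-balanced if it is both `σ`-fat and `σ`-slim. -/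
def IsBalancedIdeal {X : Type*} [PartialOrder X] (σ : X → X) (I : Set X) : Prop :=
  IsFatIdeal σ I ∧ IsSlimIdeal σ I
/-!
If a fat ideal `I` is not slim, the set of `x ∈ I` with `σ x ∈ I` is nonempty, so it has a maximal
element `a`. Removing the principal filter of `a` from `I` leaves a fat ideal: an element `x ≥ a` of
`I` is pushed into `I` by `σ`, and `σ x` cannot lie above `a` by maximality, since `σ` has no fixed
points. This strictly smaller fat ideal contradicts the minimality of `I`.
-/

section

variable {X : Type*} [PartialOrder X] {σ : X → X} {I : Set X} {a : X}

theorem IsIdeal.diff_Ici (hI : IsIdeal I) (a : X) : IsIdeal (I \ Set.Ici a) :=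
  fun _ hx y hyx => ⟨hI _ hx.1 y hyx, fun hay => hx.2 (hay.trans hyx)⟩

theorem not_le_apply_of_maximal (hσ : Function.Involutive σ) (hfix : ∀ x, σ x ≠ x)
    (ha : Maximal (· ∈ I ∩ σ ⁻¹' I) a) : ¬ a ≤ σ a := fun hle =>
  hfix a (ha.eq_of_le ⟨ha.1.2, by rw [Set.mem_preimage, hσ]; exact ha.1.1⟩ hle).symm

theorem IsFatIdeal.diff_Ici_of_maximal (hσ : Function.Involutive σ) (hanti : Antitone σ)
    (hfix : ∀ x, σ x ≠ x) (hI : IsFatIdeal σ I) (ha : Maximal (· ∈ I ∩ σ ⁻¹' I) a) :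
    IsFatIdeal σ (I \ Set.Ici a) := by
  have hσaI : σ a ∈ I := ha.1.2
  refine ⟨hI.1.diff_Ici a, fun x hx => ?_⟩
  by_cases hxI : x ∈ I
  · have hax : a ≤ x := by_contra fun h => hx ⟨hxI, h⟩
    have hσxI : σ x ∈ I := hI.1 _ hσaI _ (hanti hax)
    refine ⟨hσxI, fun hσx => not_le_apply_of_maximal hσ hfix ha ?_⟩
    have hxa : σ x = a := (ha.eq_of_le ⟨hσxI, by rwa [Set.mem_preimage, hσ]⟩ hσx).symm
    rwa [← hxa, hσ, hxa]
  · have hσxI : σ x ∈ I := hI.2 x hxI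
    -- `a ≤ σ x` would give `x ≤ σ a ∈ I`
    exact ⟨hσxI, fun hσx => hxI (hI.1 _ hσaI x (hσ x ▸ hanti hσx))⟩

end

/-- Every minimal `σ`-fat ideal is `σ`-balanced, where `σ` is an order-reversing
involution without fixed points. -/
theorem minimal_fat_ideal_is_balanced {X : Type*} [Finite X] [PartialOrder X] (σ : X → X)
    (hinv : ∀ x, σ (σ x) = x)
    (hrev : ∀ x y, x ≤ y → σ y ≤ σ x)
    (hfix : ∀ x, σ x ≠ x)
    (I : Set X) (hI : IsFatIdeal σ I)
    (hmin : ∀ J : Set X, IsFatIdeal σ J → J ⊆ I → J = I) :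
    IsBalancedIdeal σ I := by
  refine ⟨hI, hI.1, fun x hx hσx => ?_⟩
  obtain ⟨a, ha⟩ := (Set.toFinite (I ∩ σ ⁻¹' I)).exists_maximal ⟨x, hx, hσx⟩
  have hJ := hmin _ (hI.diff_Ici_of_maximal hinv (fun _ _ => hrev _ _) hfix ha) Set.sdiff_subset
  have haJ : a ∈ I \ Set.Ici a := by rw [hJ]; exact ha.1.1
  exact haJ.2 le_rfl
end

section
/- Let Y be a compact metric space acted upon by a group Γ by homeomorphisms, and Ξ ⊆ Y a compact Γ-invariant subset. Assume that for every y ∈ Ξ there exists an open neighborhood U of y, an element γ ∈ Γ, and a constant c > 1 such that d(γy', Ξ) ≥ c·d(y', Ξ) for all y' ∈ U. Then Γ acts cocompactly on Y \ Ξ, i.e., there is a compact subset K of Y \ Ξ such that Γ·K = Y \ Ξ. -/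
open Metric

/-- If `Γ` acts by homeomorphisms on a compact metric space `Y` leaving a compact set
`Ξ` invariant, and the action is expanding away from `Ξ` near `Ξ` (every point of `Ξ` has a
neighbourhood on which some `γ ∈ Γ` multiplies the distance to `Ξ` by a factor `c > 1`),
then `Γ` acts cocompactly on `Y \ Ξ`: some compact subset of `Y \ Ξ` meets every orbit. -/
theorem expansion_implies_cocompact {Γ Y : Type*} [Group Γ] [MetricSpace Y] [CompactSpace Y]
    [MulAction Γ Y] (hcont : ∀ γ : Γ, Continuous fun y : Y => γ • y)
    (Ξ : Set Y) (hΞc : IsCompact Ξ) (hΞinv : ∀ γ : Γ, (fun y => γ • y) '' Ξ = Ξ)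
    (hexp : ∀ y ∈ Ξ, ∃ U ∈ nhds y, ∃ γ : Γ, ∃ c : ℝ, 1 < c ∧
      ∀ y' ∈ U, c * infDist y' Ξ ≤ infDist (γ • y') Ξ) :
    ∃ K : Set Y, K ⊆ Ξᶜ ∧ IsCompact K ∧ ∀ y ∉ Ξ, ∃ γ : Γ, γ • y ∈ K := by
  rcases Set.eq_empty_or_nonempty Ξ with hΞ | hne
  · refine ⟨Set.univ, by simp [hΞ], isCompact_univ, fun y _ => ⟨1, Set.mem_univ _⟩⟩
  choose U hU γ c hc1 hcle using hexp
  -- cover Ξ by interiors of the U's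
  obtain ⟨t, ht⟩ := hΞc.elim_nhds_subcover' (fun x hx => interior (U x hx))
    (fun x hx => interior_mem_nhds.2 (hU x hx))
  have htne : t.Nonempty := by
    rcases hne with ⟨x, hx⟩
    rcases Set.mem_iUnion₂.1 (ht hx) with ⟨i, hi, _⟩
    exact ⟨i, hi⟩
  set cm : ℝ := t.inf' htne (fun x => c x.1 x.2) with hcm
  have hcm1 : 1 < cm := by
    rw [hcm, Finset.lt_inf'_iff]
    exact fun b _ => hc1 b.1 b.2
  have hcm0 : 0 < cm := lt_trans one_pos hcm1
  -- Lebesgue number for the cover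
  obtain ⟨ε, hε, hth⟩ := hΞc.exists_thickening_subset_open
    (isOpen_iUnion fun x => isOpen_iUnion fun _ => isOpen_interior) ht
  have key : ∀ n : ℕ, ∀ y : Y, 0 < infDist y Ξ → ε ≤ cm ^ n * infDist y Ξ →
      ∃ g : Γ, ε ≤ infDist (g • y) Ξ := by
    intro n
    induction n with
    | zero =>
      intro y _ h
      exact ⟨1, by simpa using h⟩
    | succ n ih =>
      intro y hy h
      by_cases hyε : ε ≤ infDist y Ξ
      · exact ⟨1, by simpa using hyε⟩
      push_neg at hyε
      have hyth : y ∈ thickening ε Ξ := (mem_thickening_iff_infDist_lt hne).2 hyε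
      rcases Set.mem_iUnion₂.1 (hth hyth) with ⟨x, hxt, hyU⟩
      have hyU' : y ∈ U x.1 x.2 := interior_subset hyU
      have hexp' : c x.1 x.2 * infDist y Ξ ≤ infDist (γ x.1 x.2 • y) Ξ :=
        hcle x.1 x.2 y hyU'
      have hcmc : cm ≤ c x.1 x.2 := Finset.inf'_le _ hxt
      have hstep : cm * infDist y Ξ ≤ infDist (γ x.1 x.2 • y) Ξ :=
        le_trans (mul_le_mul_of_nonneg_right hcmc hy.le) hexp'
      have hpos : 0 < infDist (γ x.1 x.2 • y) Ξ :=
        lt_of_lt_of_le (mul_pos hcm0 hy) hstep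
      have hn : ε ≤ cm ^ n * infDist (γ x.1 x.2 • y) Ξ := by
        calc ε ≤ cm ^ (n + 1) * infDist y Ξ := h
          _ = cm ^ n * (cm * infDist y Ξ) := by ring
          _ ≤ cm ^ n * infDist (γ x.1 x.2 • y) Ξ :=
            mul_le_mul_of_nonneg_left hstep (pow_nonneg hcm0.le n)
      rcases ih (γ x.1 x.2 • y) hpos hn with ⟨g, hg⟩
      exact ⟨g * γ x.1 x.2, by rwa [mul_smul]⟩
  refine ⟨{y | ε ≤ infDist y Ξ}, ?_, ?_, ?_⟩
  · intro y hy hyΞ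
    have : infDist y Ξ = 0 := infDist_zero_of_mem hyΞ
    simp only [Set.mem_setOf_eq, this] at hy
    exact absurd hy (not_le.2 hε)
  · exact (isClosed_le continuous_const (continuous_infDist_pt Ξ)).isCompact
  · intro y hy
    have hd : 0 < infDist y Ξ :=
      (hΞc.isClosed.notMem_iff_infDist_pos hne).1 hy
    obtain ⟨n, hn⟩ := pow_unbounded_of_one_lt (ε / infDist y Ξ) hcm1
    have : ε ≤ cm ^ n * infDist y Ξ := by
      rw [div_lt_iff₀ hd] at hn
      linarith
    exact key n y hd this
end

section
/- Let Z be a metric space, A ⊆ Z a closed subset invariant under a group Γ acting by homeomorphisms. Suppose A is compact and the action of Γ is expanding at A, i.e., for every z ∈ A there exist γ ∈ Γ, an open neighborhood U of z, and c > 1 with d(γx, γy) ≥ c·d(x,y) for all x, y ∈ U. Then the action is arbitrarily strongly expanding at A: for every z ∈ A and every c > 1 there exist γ ∈ Γ and a neighborhood U of z on which γ expands distances by at least the factor c. -/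
/-- If a group `Γ` acts by homeomorphisms on a metric space `Z`, leaving invariant a compact
set `A` at which the action is expanding, then the action is arbitrarily strongly expanding
at `A`: for every `z ∈ A` and every `c > 1` there are `γ ∈ Γ` and a neighbourhood of `z`
on which `γ` expands distances at least by the factor `c`. -/
theorem expanding_arbitrarily_strongly {Γ Z : Type*} [Group Γ] [MetricSpace Z] [MulAction Γ Z]
    (hcont : ∀ γ : Γ, Continuous fun z : Z => γ • z)
    (A : Set Z) (hAc : IsCompact A) (hAcl : IsClosed A)
    (hAinv : ∀ γ : Γ, (fun z => γ • z) '' A = A)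
    (hexp : ∀ z ∈ A, ∃ γ : Γ, ∃ U : Set Z, IsOpen U ∧ z ∈ U ∧ ∃ c : ℝ, 1 < c ∧
      ∀ x ∈ U, ∀ y ∈ U, c * dist x y ≤ dist (γ • x) (γ • y)) :
    ∀ z ∈ A, ∀ c : ℝ, 1 < c → ∃ γ : Γ, ∃ U : Set Z, IsOpen U ∧ z ∈ U ∧
      ∀ x ∈ U, ∀ y ∈ U, c * dist x y ≤ dist (γ • x) (γ • y) := by
  intro z hz c hc
  choose! γf Uf hUopen hUmem cf hcf hexpand using hexp
  have hnhds : ∀ w ∈ A, Uf w ∈ nhds w := fun w hw =>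
    (hUopen w hw).mem_nhds (hUmem w hw)
  obtain ⟨t, htA, htcov⟩ := hAc.elim_nhds_subcover Uf hnhds
  have htne : t.Nonempty := by
    rcases Set.mem_iUnion₂.1 (htcov hz) with ⟨i, hi, -⟩
    exact ⟨i, hi⟩
  set c₀ : ℝ := t.inf' htne cf with hc₀def
  have hc₀ : 1 < c₀ := by
    rw [hc₀def, Finset.lt_inf'_iff]
    exact fun i hi => hcf i (htA i hi)
  have key : ∀ w ∈ A, ∃ γ : Γ, ∃ U : Set Z, IsOpen U ∧ w ∈ U ∧
      ∀ x ∈ U, ∀ y ∈ U, c₀ * dist x y ≤ dist (γ • x) (γ • y) := by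
    intro w hw
    rcases Set.mem_iUnion₂.1 (htcov hw) with ⟨i, hi, hwi⟩
    have hiA := htA i hi
    refine ⟨γf i, Uf i, hUopen i hiA, hwi, fun x hx y hy => ?_⟩
    calc c₀ * dist x y ≤ cf i * dist x y := by
          exact mul_le_mul_of_nonneg_right (Finset.inf'_le cf hi) dist_nonneg
      _ ≤ dist (γf i • x) (γf i • y) := hexpand i hiA x hx y hy
  have hinv : ∀ (γ : Γ) (w : Z), w ∈ A → γ • w ∈ A := by
    intro γ w hw
    rw [← hAinv γ]
    exact ⟨w, hw, rfl⟩
  have pow : ∀ n : ℕ, ∀ w ∈ A, ∃ γ : Γ, ∃ U : Set Z, IsOpen U ∧ w ∈ U ∧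
      ∀ x ∈ U, ∀ y ∈ U, c₀ ^ n * dist x y ≤ dist (γ • x) (γ • y) := by
    intro n
    induction n with
    | zero =>
      intro w _
      exact ⟨1, Set.univ, isOpen_univ, Set.mem_univ w, fun x _ y _ => by
        simp [one_smul]⟩
    | succ n ih =>
      intro w hw
      obtain ⟨γ₁, U₁, hU₁o, hwU₁, h₁⟩ := key w hw
      obtain ⟨γ₂, U₂, hU₂o, hwU₂, h₂⟩ := ih (γ₁ • w) (hinv γ₁ w hw)
      refine ⟨γ₂ * γ₁, U₁ ∩ (fun x => γ₁ • x) ⁻¹' U₂,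
        hU₁o.inter (hU₂o.preimage (hcont γ₁)), ⟨hwU₁, hwU₂⟩, ?_⟩
      intro x hx y hy
      have h1 := h₁ x hx.1 y hy.1
      have h2 := h₂ (γ₁ • x) hx.2 (γ₁ • y) hy.2
      calc c₀ ^ (n + 1) * dist x y = c₀ ^ n * (c₀ * dist x y) := by ring
        _ ≤ c₀ ^ n * dist (γ₁ • x) (γ₁ • y) :=
            mul_le_mul_of_nonneg_left h1 (pow_nonneg (le_of_lt (lt_trans one_pos hc₀)) n)
        _ ≤ dist (γ₂ • γ₁ • x) (γ₂ • γ₁ • y) := h2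
        _ = dist ((γ₂ * γ₁) • x) ((γ₂ * γ₁) • y) := by rw [mul_smul, mul_smul]
  obtain ⟨n, hn⟩ := pow_unbounded_of_one_lt c hc₀
  obtain ⟨γ, U, hUo, hzU, hU⟩ := pow n z hz
  refine ⟨γ, U, hUo, hzU, fun x hx y hy => ?_⟩
  calc c * dist x y ≤ c₀ ^ n * dist x y :=
        mul_le_mul_of_nonneg_right hn.le dist_nonneg
    _ ≤ dist (γ • x) (γ • y) := hU x hx y hy
end

section
/- Identify the quotient W̃/S, where W̃ is the group of signed permutation matrices of determinant 1 in SL(n,ℝ) and S is the subgroup whose elements fix the span of the first k standard basis vectors preserving orientation data appropriately, with the set {±1} × {k-element subsets of {1,…,n}}. Define the involution w₀ acting by (ε, {i₁,…,i_k}) ↦ ((−1)^{k(k−1)/2 + Σ_j(i_j+1)}·ε, {n+1−i_k, …, n+1−i₁}). Then w₀ has no fixed points if and only if either (n is even and k is odd) or (n is odd and k(n+k+2)/2 is odd). -/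
open Finset

private lemma sym_sum {n : ℕ} {I : Finset ℕ} (hsub : I ⊆ Finset.Icc 1 n)
    (hsym : I.image (fun i => n + 1 - i) = I) :
    2 * ∑ i ∈ I, i = I.card * (n + 1) := by
  have hmem : ∀ i ∈ I, 1 ≤ i ∧ i ≤ n := fun i hi => by
    simpa [Finset.mem_Icc] using hsub hi
  have h1 : ∑ i ∈ I, i = ∑ i ∈ I, (n + 1 - i) := by
    conv_lhs => rw [← hsym]
    rw [Finset.sum_image]
    intro a ha b hb hab
    have h1 := hmem a ha
    have h2 := hmem b hb
    simp only at hab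
    omega
  have h2 : ∑ i ∈ I, (i + (n + 1 - i)) = ∑ _i ∈ I, (n + 1) :=
    Finset.sum_congr rfl fun i hi => by have := hmem i hi; omega
  rw [Finset.sum_add_distrib, ← h1, Finset.sum_const, smul_eq_mul] at h2
  omega

private lemma expo {n k : ℕ} {I : Finset ℕ} (hk1 : 1 ≤ k) (hsub : I ⊆ Finset.Icc 1 n)
    (hcard : I.card = k) (hsym : I.image (fun i => n + 1 - i) = I) :
    (k * (k - 1) / 2 + ∑ i ∈ I, (i + 1) = k * (n + k + 2) / 2) ∧ (Odd k → Odd n) := by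
  have h := sym_sum hsub hsym
  rw [hcard] at h
  have hsum1 : ∑ i ∈ I, (i + 1) = (∑ i ∈ I, i) + k := by
    rw [Finset.sum_add_distrib, Finset.sum_const, smul_eq_mul, mul_one, hcard]
  have heven : Even (k * (k - 1)) := by
    have := Nat.even_mul_succ_self (k - 1)
    have hkk : (k - 1) * (k - 1 + 1) = k * (k - 1) := by
      rw [mul_comm]
      congr 1
      omega
    rwa [hkk] at this
  constructor
  · have hB : k * (n + k + 2) = k * (k - 1) + 2 * (∑ i ∈ I, i) + 2 * k := by
      have hnk : n + k + 2 = (k - 1) + (n + 1) + 2 := by omega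
      rw [h, hnk]
      ring
    rw [hsum1]
    obtain ⟨a, ha⟩ := heven
    rw [ha] at hB ⊢
    generalize hBdef : k * (n + k + 2) = B at hB ⊢
    omega
  · intro hkodd
    rcases Nat.even_or_odd n with hn | hn
    · exfalso
      have hodd : Odd (k * (n + 1)) := hkodd.mul hn.add_one
      obtain ⟨t, ht⟩ := hodd
      rw [ht] at h
      omega
    · exact hn

private lemma exists_sym (n k : ℕ) (hk : k ≤ n) (h : Even k ∨ Odd n) :
    ∃ I : Finset ℕ, I ⊆ Finset.Icc 1 n ∧ I.card = k ∧
      I.image (fun i => n + 1 - i) = I := by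
  rcases Nat.even_or_odd k with hke | hko
  · obtain ⟨m, hm⟩ := hke
    refine ⟨Finset.Icc 1 m ∪ Finset.Icc (n + 1 - m) n, ?_, ?_, ?_⟩
    · intro x hx
      simp only [Finset.mem_union, Finset.mem_Icc] at hx ⊢
      omega
    · rw [Finset.card_union_of_disjoint, Nat.card_Icc, Nat.card_Icc]
      · omega
      · rw [Finset.disjoint_left]
        intro x hx hx'
        simp only [Finset.mem_Icc] at hx hx'
        omega
    · ext x
      simp only [Finset.mem_image, Finset.mem_union, Finset.mem_Icc]
      constructor
      · rintro ⟨i, hi, rfl⟩; omega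
      · intro hx; exact ⟨n + 1 - x, by omega, by omega⟩
  · have hno : Odd n := by
      rcases h with h | h
      · exfalso
        rw [Nat.even_iff] at h
        rw [Nat.odd_iff] at hko
        omega
      · exact h
    obtain ⟨m, hm⟩ := hko
    obtain ⟨c, hc⟩ := hno
    refine ⟨Finset.Icc (c + 1 - m) (c + 1 + m), ?_, ?_, ?_⟩
    · intro x hx
      simp only [Finset.mem_Icc] at hx ⊢
      omega
    · rw [Nat.card_Icc]
      omega
    · ext x
      simp only [Finset.mem_image, Finset.mem_Icc]
      constructor
      · rintro ⟨i, hi, rfl⟩; omega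
      · intro hx; exact ⟨n + 1 - x, by omega, by omega⟩

/-- On `{±1} × {k-element subsets of {1,…,n}}`, the involution
`w₀ : (ε, I) ↦ ((−1)^{k(k−1)/2 + Σ_{i∈I}(i+1)}·ε, {n+1−i : i ∈ I})` has no fixed points if
and only if either (`n` even and `k` odd) or (`n` odd and `k(n+k+2)/2` odd). -/
theorem w0_fixed_point_free (n k : ℕ) (hk1 : 1 ≤ k) (hk2 : k ≤ n - 1) :
    (∀ (ε : ℤˣ) (I : Finset ℕ), I ⊆ Finset.Icc 1 n → I.card = k →
        ¬(((-1 : ℤˣ) ^ (k * (k - 1) / 2 + ∑ i ∈ I, (i + 1)) * ε = ε) ∧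
          I.image (fun i => n + 1 - i) = I)) ↔
      ((Even n ∧ Odd k) ∨ (Odd n ∧ Odd (k * (n + k + 2) / 2))) := by
  have hkn : k ≤ n := by omega
  constructor
  · intro h
    rcases Nat.even_or_odd n with hn | hn
    · rcases Nat.even_or_odd k with hke | hko
      · exfalso
        obtain ⟨I, hsub, hcard, hsym⟩ := exists_sym n k hkn (Or.inl hke)
        have he := (expo hk1 hsub hcard hsym).1
        have hE : Even (k * (n + k + 2) / 2) := by
          obtain ⟨a, ha⟩ := hke
          obtain ⟨b, hb⟩ := hn
          have h1 : k * (n + k + 2) = 2 * (a * (n + k + 2)) := by rw [ha]; ring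
          rw [h1, Nat.mul_div_cancel_left _ two_pos]
          have h2 : Even (n + k + 2) := ⟨b + a + 1, by omega⟩
          exact h2.mul_left a
        exact h 1 I hsub hcard ⟨by rw [he, Even.neg_one_pow hE, one_mul], hsym⟩
      · exact Or.inl ⟨hn, hko⟩
    · rcases Nat.even_or_odd (k * (n + k + 2) / 2) with hE | hE
      · exfalso
        obtain ⟨I, hsub, hcard, hsym⟩ := exists_sym n k hkn (Or.inr hn)
        have he := (expo hk1 hsub hcard hsym).1
        exact h 1 I hsub hcard ⟨by rw [he, Even.neg_one_pow hE, one_mul], hsym⟩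
      · exact Or.inr ⟨hn, hE⟩
  · rintro hrhs ε I hsub hcard ⟨hsign, hsym⟩
    obtain ⟨he, hkodd⟩ := expo hk1 hsub hcard hsym
    rcases hrhs with ⟨hn, hk⟩ | ⟨hn, hE⟩
    · have := hkodd hk
      rw [Nat.odd_iff] at this
      rw [Nat.even_iff] at hn
      omega
    · rw [he, Odd.neg_one_pow hE] at hsign
      rcases Int.units_eq_one_or ε with rfl | rfl <;> exact absurd hsign (by decide)
end
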